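/- Let S : ℝ → Set be a constructible persistent set (a functor from the poset (ℝ,≤) to Sets admitting a finite critical set). If {C_i}_{i∈I} is any family of finite critical sets of S, then their intersection C = ⋂_{i∈I} C_i is again a critical set of S. -/
import Mathlib


/-- A persistent set: a functor from the poset `(ℝ, ≤)` to `Sets`. -/
structure PersistentSet where
  obj : ℝ → Type
  map : ∀ {s t : ℝ}, s ≤ t → obj s → obj t
  map_id : ∀ (t : ℝ) (x : obj t), map le_rfl x = x
  map_comp : ∀ {s t u : ℝ} (h₁ : s ≤ t) (h₂ : t ≤ u) (x : obj s),
    map h₂ (map h₁ x) = map (h₁.trans h₂) x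

/-- A finite set `C ⊂ ℝ` is a critical set for `S` if `S t` is empty below all of `C`
and the transition maps are bijective whenever no element of `C` lies in `[s, t]`
(i.e. `s, t` lie in the same open interval between consecutive critical values,
or both lie above all critical values). -/
def IsCriticalSet (S : PersistentSet) (C : Finset ℝ) : Prop :=
  (∀ t : ℝ, (∀ c ∈ C, t < c) → IsEmpty (S.obj t)) ∧
  (∀ (s t : ℝ) (h : s ≤ t), (∀ c ∈ C, c < s ∨ t < c) → Function.Bijective (S.map h))

/-- A point not in a finite set of reals has an `ε`-interval avoiding the set. -/
lemma finset_avoid (F : Finset ℝ) (u : ℝ) (hu : u ∉ F) :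
    ∃ ε > 0, ∀ c ∈ F, c < u - ε ∨ u + ε < c := by
  have hcl : IsClosed (F : Set ℝ) := F.finite_toSet.isClosed
  have hm : ((F : Set ℝ)ᶜ) ∈ nhds u := hcl.isOpen_compl.mem_nhds (by simpa using hu)
  obtain ⟨δ, hδ, hball⟩ := Metric.mem_nhds_iff.mp hm
  refine ⟨δ / 2, by linarith, fun c hc => ?_⟩
  have hnb : c ∉ Metric.ball u δ := fun hcb => (hball hcb) (by simpa using hc)
  rw [Metric.mem_ball, Real.dist_eq, not_lt] at hnb
  rcases abs_cases (c - u) with ⟨h1, _⟩ | ⟨h1, _⟩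
  · right; linarith
  · left; linarith

/-- Local-to-global bijectivity for transition maps of a persistent set. -/
lemma bij_of_local (S : PersistentSet) (s t : ℝ) (h : s ≤ t)
    (H : ∀ u, s ≤ u → u ≤ t → ∃ ε > 0, ∀ (a b : ℝ) (hab : a ≤ b),
      u - ε ≤ a → b ≤ u + ε → Function.Bijective (S.map hab)) :
    Function.Bijective (S.map h) := by
  set T : Set ℝ := {u : ℝ | ∃ hu : s ≤ u, u ≤ t ∧ Function.Bijective (S.map hu)} with hT
  have hid : Function.Bijective (S.map (le_refl s)) := by
    have he : S.map (le_refl s) = id := funext (S.map_id s)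
    rw [he]; exact Function.bijective_id
  have hsT : s ∈ T := ⟨le_rfl, h, hid⟩
  have hne : T.Nonempty := ⟨s, hsT⟩
  have hbdd : BddAbove T := ⟨t, fun u hu => hu.2.1⟩
  set m := sSup T with hm
  have hsm : s ≤ m := le_csSup hbdd hsT
  have hmt : m ≤ t := csSup_le hne (fun u hu => hu.2.1)
  obtain ⟨ε, hε, hbij⟩ := H m hsm hmt
  obtain ⟨u, huT, hu⟩ : ∃ u ∈ T, m - ε < u :=
    exists_lt_of_lt_csSup hne (by linarith)
  have hum : u ≤ m := le_csSup hbdd huT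
  obtain ⟨hsu, hut, hbu⟩ := huT
  set b := min t (m + ε) with hb
  have hub : u ≤ b := le_min hut (by linarith)
  have hbb : Function.Bijective (S.map hub) :=
    hbij u b hub (by linarith) (min_le_right _ _)
  have hcomp : Function.Bijective (S.map (hsu.trans hub)) := by
    have he : S.map (hsu.trans hub) = (S.map hub) ∘ (S.map hsu) :=
      funext fun x => (S.map_comp hsu hub x).symm
    rw [he]; exact hbb.comp hbu
  have hbT : b ∈ T := ⟨hsu.trans hub, min_le_left _ _, hcomp⟩
  have hbm : b ≤ m := le_csSup hbdd hbT
  have htm : t ≤ m + ε := by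
    by_contra hh
    push_neg at hh
    have : b = m + ε := min_eq_right hh.le
    rw [this] at hbm; linarith
  have hbt : b = t := min_eq_left htm
  rw [hbt] at hbT
  obtain ⟨h', _, bij⟩ := hbT
  exact bij

/-- the intersection of any (nonempty) family of finite critical sets of a
constructible persistent set is again a critical set. -/
theorem isCriticalSet_iInter (S : PersistentSet) {I : Type} [Nonempty I]
    (Cs : I → Finset ℝ) (hCs : ∀ i, IsCriticalSet S (Cs i))
    (C : Finset ℝ) (hC : (C : Set ℝ) = ⋂ i, ((Cs i : Set ℝ))) :
    IsCriticalSet S C := by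
  have hmemC : ∀ x : ℝ, x ∉ C → ∃ j, x ∉ Cs j := by
    intro x hx
    by_contra hco
    push_neg at hco
    have : x ∈ (C : Set ℝ) := by
      rw [hC, Set.mem_iInter]; intro i; exact_mod_cast hco i
    exact hx (by exact_mod_cast this)
  constructor
  · -- emptiness below all of C
    intro t ht
    by_contra hne
    rw [not_isEmpty_iff] at hne
    set N : Set ℝ := {u : ℝ | Nonempty (S.obj u)} with hN
    have htN : t ∈ N := hne
    obtain ⟨i₀⟩ := (inferInstance : Nonempty I)
    rcases (Cs i₀).eq_empty_or_nonempty with h0 | h0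
    · exact ((hCs i₀).1 t (by simp [h0])).false hne.some
    have hbdd : BddBelow N := by
      refine ⟨(Cs i₀).min' h0, fun u hu => ?_⟩
      by_contra hlt
      push_neg at hlt
      exact ((hCs i₀).1 u (fun c hc => lt_of_lt_of_le hlt ((Cs i₀).min'_le c hc))).false hu.some
    set b := sInf N with hbdef
    have hbt : b ≤ t := csInf_le hbdd htN
    have hbC : b ∉ C := fun hb => absurd (ht b hb) (by linarith)
    obtain ⟨j, hj⟩ := hmemC b hbC
    obtain ⟨ε, hε, hav⟩ := finset_avoid (Cs j) b hj
    obtain ⟨u, huN, hu⟩ : ∃ u ∈ N, u < b + ε :=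
      exists_lt_of_csInf_lt ⟨t, htN⟩ (by linarith)
    have hbu : b ≤ u := csInf_le hbdd huN
    have hau : b - ε / 2 ≤ u := by linarith
    have hbij : Function.Bijective (S.map hau) := by
      refine (hCs j).2 _ u hau (fun c hc => ?_)
      rcases hav c hc with h' | h'
      · left; linarith
      · right; linarith
    obtain ⟨y, _⟩ := hbij.2 huN.some
    have : b - ε / 2 ∈ N := ⟨y⟩
    have := csInf_le hbdd this
    linarith
  · -- bijectivity away from C
    intro s t h hcond
    refine bij_of_local S s t h (fun u hsu hut => ?_)
    have huC : u ∉ C := by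
      intro hu
      rcases hcond u hu with h' | h' <;> linarith
    obtain ⟨j, hj⟩ := hmemC u huC
    obtain ⟨ε, hε, hav⟩ := finset_avoid (Cs j) u hj
    refine ⟨ε, hε, fun a b hab ha hb => ?_⟩
    refine (hCs j).2 a b hab (fun c hc => ?_)
    rcases hav c hc with h' | h'
    · left; linarith
    · right; linarith
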